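/- arXiv:2209.15091 — 3 statements merged into one kernel-verified Lean document; each statement's English description precedes it below -/
import Mathlib

section
/- For SRR with fixed m and c, the privacy parameter ε = max_{x,x'} log(c · ((m−1)dc − (c−1)Σ_{j=2}^{m-1}(j−1)|G_j(x)|) / ((m−1)dc − (c−1)Σ_{j=2}^{m-1}(j−1)|G_j(x')|)) is a nondecreasing function of c (for c ≥ 1, with group sizes fixed). -/
open Finset

/-- the SRR privacy bound
ε(c) = max_{x,x'} log(c·((m−1)dc − (c−1)S(x))/((m−1)dc − (c−1)S(x')))
is a nondecreasing function of c ≥ 1, with group sizes fixed. -/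
theorem srr_privacy_bound_monotone_in_c
    {D : Type*} [Fintype D] [Nonempty D]
    (d m : ℕ) (hd : 1 ≤ d) (hm : 2 ≤ m)
    (S : D → ℝ)  -- S x = Σ_{j=2}^{m-1} (j−1)·|G_j(x)|
    (hS0 : ∀ x, 0 ≤ S x) (hS1 : ∀ x, S x ≤ ((m : ℝ) - 1) * d)
    (E : ℝ → ℝ)
    (hE : ∀ c : ℝ, E c = (Finset.univ : Finset (D × D)).sup' Finset.univ_nonempty
      (fun p => Real.log (c *
        ((((m : ℝ) - 1) * d * c - (c - 1) * S p.1) /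
         (((m : ℝ) - 1) * d * c - (c - 1) * S p.2))))) :
    ∀ c₁ c₂ : ℝ, 1 ≤ c₁ → c₁ ≤ c₂ → E c₁ ≤ E c₂ := by
  intro c₁ c₂ h1 h12
  rw [hE c₁, hE c₂]
  apply Finset.sup'_le
  intro p _
  refine le_trans ?_ (Finset.le_sup' _ (Finset.mem_univ p))
  set M : ℝ := ((m : ℝ) - 1) * d with hMdef
  have hM : (1 : ℝ) ≤ M := by
    have h1' : (1 : ℝ) ≤ (m : ℝ) - 1 := by
      have : (2 : ℝ) ≤ (m : ℝ) := by exact_mod_cast hm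
      linarith
    have hd' : (1 : ℝ) ≤ (d : ℝ) := by exact_mod_cast hd
    nlinarith
  have key : ∀ c s, 1 ≤ c → 0 ≤ s → s ≤ M → (1 : ℝ) ≤ M * c - (c - 1) * s := by
    intro c s hc hs0 hs1
    nlinarith
  have h2 : (1 : ℝ) ≤ c₂ := le_trans h1 h12
  have hA1 := key c₁ (S p.1) h1 (hS0 p.1) (hS1 p.1)
  have hB1 := key c₁ (S p.2) h1 (hS0 p.2) (hS1 p.2)
  have hA2 := key c₂ (S p.1) h2 (hS0 p.1) (hS1 p.1)
  have hB2 := key c₂ (S p.2) h2 (hS0 p.2) (hS1 p.2)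
  apply Real.log_le_log
  · positivity
  · rw [← mul_div_assoc, ← mul_div_assoc, div_le_div_iff₀ (by linarith) (by linarith)]
    have hAmono : M * c₁ - (c₁ - 1) * S p.1 ≤ M * c₂ - (c₂ - 1) * S p.1 := by
      nlinarith [hS1 p.1, hS0 p.1]
    have hcB : c₁ * (M * c₂ - (c₂ - 1) * S p.2) ≤ c₂ * (M * c₁ - (c₁ - 1) * S p.2) := by
      nlinarith [hS0 p.2]
    have hprod := mul_le_mul hAmono hcB (by nlinarith) (by linarith)
    nlinarith [hprod]
end

section
/- Let R_max(m) = (c−1)·d·(m²−m)/2 for real m ≥ 2, c > 1, d > 0. Then the function f(m) = (m−1)/((m−1)cd − R_max(m)) · log(c(m−1)/((m−1)cd − R_max(m))) has a critical point precisely when log((m−1)/((m−1)cd − R_max(m))) + log c + 1 = 0, and this yields m = 2(cd − e·c)/((c−1)d) (where e·c = e^{1+log c}), provided (m−1)cd − R_max(m) > 0. -/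
open Real

/-!
Writing `N m = (m - 1) * (c d - b m)` with `b = (c - 1) d / 2`, the objective is
`f = ψ ∘ t` for `ψ s = s log (c s)` and `t m = (c d - b m)⁻¹ = (m - 1) / N m`; as `b < c d`,
`N m > 0` forces both factors of `N m` to be positive.
Since `ψ' s = log (c s) + 1` and `t' m = b t(m)² ≠ 0`, the critical points of `f` are those of `ψ`,
and `log (c t) = -1` means `c d - b m = c e`, which is linear in `m`.
-/

theorem hasDerivAt_mul_log_const_mul {c t : ℝ} (hc : c ≠ 0) (ht : t ≠ 0) :
    HasDerivAt (fun s => s * log (c * s)) (log (c * t) + 1) t := by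
  have hlog := ((hasDerivAt_id' t).const_mul c).log (mul_ne_zero hc ht)
  refine ((hasDerivAt_id' t).mul hlog).congr_deriv ?_
  field_simp

theorem hasDerivAt_inv_sub_mul {a b x : ℝ} (hx : a - b * x ≠ 0) :
    HasDerivAt (fun y => (a - b * y)⁻¹) (b / (a - b * x) ^ 2) x := by
  have hlin : HasDerivAt (fun y => a - b * y) (-b) x := by
    simpa using ((hasDerivAt_id' x).const_mul b).const_sub a
  exact (hlin.inv hx).congr_deriv (by ring)

section FactoredDenominator

variable {N : ℝ → ℝ} {a b : ℝ}

theorem div_eq_inv_of_eq_mul (hN : ∀ x, N x = (x - 1) * (a - b * x)) {x : ℝ} (hx : x ≠ 1) :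
    (x - 1) / N x = (a - b * x)⁻¹ := by
  rw [hN, div_mul_cancel_left₀ (sub_ne_zero.2 hx)]

theorem hasDerivAt_mul_log_of_eq_mul (hN : ∀ x, N x = (x - 1) * (a - b * x))
    {f : ℝ → ℝ} {c : ℝ} (hc : c ≠ 0)
    (hf : ∀ x, f x = (x - 1) / N x * log (c * (x - 1) / N x))
    {m : ℝ} (hm : m ≠ 1) (hu : a - b * m ≠ 0) :
    HasDerivAt f ((log (c * ((m - 1) / N m)) + 1) * (b / (a - b * m) ^ 2)) m := by
  have hcomp := (hasDerivAt_mul_log_const_mul hc (inv_ne_zero hu)).comp m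
    (hasDerivAt_inv_sub_mul hu)
  rw [div_eq_inv_of_eq_mul hN hm]
  refine hcomp.congr_of_eventuallyEq ?_
  filter_upwards [isOpen_ne.mem_nhds hm] with x hx
  simp only [Function.comp_apply, hf, mul_div_assoc, div_eq_inv_of_eq_mul hN hx]

theorem one_lt_and_pos_of_mul_pos {x : ℝ} (hb : 0 ≤ b) (hab : b < a)
    (h : 0 < (x - 1) * (a - b * x)) : 1 < x ∧ 0 < a - b * x := by
  rcases pos_and_pos_or_neg_and_neg_of_mul_pos h with ⟨hx, hu⟩ | ⟨hx, hu⟩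
  · exact ⟨by linarith, hu⟩
  · nlinarith

end FactoredDenominator

theorem eq_mul_exp_one_of_log_inv_add_log_add_one_eq_zero {u c : ℝ} (hu : 0 < u) (hc : 0 < c)
    (h : log u⁻¹ + log c + 1 = 0) : u = c * exp 1 := by
  refine log_injOn_pos hu (Set.mem_Ioi.2 (by positivity)) ?_
  rw [log_mul hc.ne' (exp_pos 1).ne', log_exp]
  rw [log_inv] at h
  linarith

theorem srr_optimal_m_first_order_condition_general
    (c d : ℝ) (hc : 1 < c) (hd : 0 < d)
    (R : ℝ → ℝ) (hR : ∀ m, R m = (c - 1) * d * (m ^ 2 - m) / 2)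
    (N : ℝ → ℝ) (hN : ∀ m, N m = (m - 1) * c * d - R m)
    (f : ℝ → ℝ)
    (hf : ∀ m, f m = (m - 1) / N m * Real.log (c * (m - 1) / N m))
    (m : ℝ) (hNm : 0 < N m) :
    (deriv f m = 0 ↔ Real.log ((m - 1) / N m) + Real.log c + 1 = 0) ∧
    (Real.log ((m - 1) / N m) + Real.log c + 1 = 0 →
      m = 2 * (c * d - Real.exp 1 * c) / ((c - 1) * d)) := by
  have hc0 : 0 < c := by linarith
  have hb : 0 < (c - 1) * d / 2 := by have := sub_pos.2 hc; positivity
  have hNfac : ∀ x, N x = (x - 1) * (c * d - (c - 1) * d / 2 * x) := fun x => by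
    rw [hN, hR]; ring
  obtain ⟨hm, hu⟩ := one_lt_and_pos_of_mul_pos hb.le (by nlinarith) (hNfac m ▸ hNm)
  have hderiv := (hasDerivAt_mul_log_of_eq_mul hNfac hc0.ne' hf hm.ne' hu.ne').deriv
  have ht : (m - 1) / N m ≠ 0 := div_ne_zero (sub_ne_zero.2 hm.ne') hNm.ne'
  refine ⟨?_, fun h => ?_⟩
  · rw [hderiv, mul_eq_zero, or_iff_left (by positivity), log_mul hc0.ne' ht]
    constructor <;> intro h <;> linarith
  · rw [div_eq_inv_of_eq_mul hNfac hm.ne'] at h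
    have hroot := eq_mul_exp_one_of_log_inv_add_log_add_one_eq_zero hu hc0 h
    rw [eq_div_iff (by positivity)]
    linarith

/-- first-order condition for the optimal number of groups m.
With R_max(m) = (c−1)d(m²−m)/2 and f(m) = (m−1)/N(m) · log(c(m−1)/N(m)),
N(m) = (m−1)cd − R_max(m), a point m (with N(m) > 0, m > 1) is critical
precisely when log((m−1)/N(m)) + log c + 1 = 0, and this yields
m = 2(cd − e·c)/((c−1)d). -/
theorem srr_optimal_m_first_order_condition
    (c d : ℝ) (hc : 1 < c) (hd : 0 < d)
    (R : ℝ → ℝ) (hR : ∀ m, R m = (c - 1) * d * (m ^ 2 - m) / 2)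
    (N : ℝ → ℝ) (hN : ∀ m, N m = (m - 1) * c * d - R m)
    (f : ℝ → ℝ)
    (hf : ∀ m, f m = (m - 1) / N m * Real.log (c * (m - 1) / N m))
    (m : ℝ) (hm : 1 < m) (hNm : 0 < N m) :
    (deriv f m = 0 ↔ Real.log ((m - 1) / N m) + Real.log c + 1 = 0) ∧
    (Real.log ((m - 1) / N m) + Real.log c + 1 = 0 →
      m = 2 * (c * d - Real.exp 1 * c) / ((c - 1) * d)) :=
  srr_optimal_m_first_order_condition_general c d hc hd R hR N hN f hf m hNm
end

section
/- Under the hypotheses of the SRR L2 error bound (E[L2(p̃,p)] ≤ 2√d/(√n(2γ − dμ)) with 2γ > dμ > 0), the L1 estimation error satisfies E[L1(p̃,p)] ≤ 2d/(√n·(2γ − dμ)). -/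
open MeasureTheory Finset

/-- from the L2 bound E[L2(p̃,p)] ≤ 2√d/(√n(2γ − dμ)) and
L1 ≤ √d·L2 (Cauchy–Schwarz), the L1 error satisfies
E[L1(p̃,p)] ≤ 2d/(√n·(2γ − dμ)). -/
theorem srr_l1_error_bound
    {Ω : Type*} [MeasurableSpace Ω] (P : Measure Ω) [IsProbabilityMeasure P]
    {D : Type*} [Fintype D]
    (d n : ℕ) (hd : Fintype.card D = d) (hdpos : 0 < d) (hn : 0 < n)
    (p : D → ℝ) (ptilde : D → Ω → ℝ)   -- true and estimated distributions
    (L1 L2 : Ω → ℝ)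
    (hL1 : ∀ ω, L1 ω = ∑ x, |ptilde x ω - p x|)
    (hL2 : ∀ ω, L2 ω = Real.sqrt (∑ x, (ptilde x ω - p x) ^ 2))
    (hint1 : Integrable L1 P) (hint2 : Integrable L2 P)
    (γ μ : ℝ) (hμ : 0 < μ) (hγ : (d : ℝ) * μ < 2 * γ)
    (hl2bound : ∫ ω, L2 ω ∂P ≤
      2 * Real.sqrt d / (Real.sqrt n * (2 * γ - (d : ℝ) * μ))) :
    ∫ ω, L1 ω ∂P ≤ 2 * (d : ℝ) / (Real.sqrt n * (2 * γ - (d : ℝ) * μ)) := by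
  have hpt : ∀ ω, L1 ω ≤ Real.sqrt d * L2 ω := by
    intro ω
    rw [hL1, hL2]
    have h1 : (∑ x, |ptilde x ω - p x|) ^ 2 ≤
        (d : ℝ) * ∑ x, (ptilde x ω - p x) ^ 2 := by
      have := sq_sum_le_card_mul_sum_sq (s := (univ : Finset D))
        (f := fun x => |ptilde x ω - p x|)
      simpa [hd, sq_abs] using this
    have hs : (0:ℝ) ≤ ∑ x, |ptilde x ω - p x| :=
      Finset.sum_nonneg fun x _ => abs_nonneg _
    have := Real.sqrt_le_sqrt h1
    rw [Real.sqrt_sq hs] at this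
    calc ∑ x, |ptilde x ω - p x| ≤
        Real.sqrt ((d : ℝ) * ∑ x, (ptilde x ω - p x) ^ 2) := this
      _ = Real.sqrt d * Real.sqrt (∑ x, (ptilde x ω - p x) ^ 2) :=
        Real.sqrt_mul (Nat.cast_nonneg d) _
  have hmono : ∫ ω, L1 ω ∂P ≤ ∫ ω, Real.sqrt d * L2 ω ∂P :=
    integral_mono hint1 (hint2.const_mul _) hpt
  have hsd : (0:ℝ) ≤ Real.sqrt d := Real.sqrt_nonneg _
  have h2 : ∫ ω, Real.sqrt d * L2 ω ∂P ≤
      Real.sqrt d * (2 * Real.sqrt d / (Real.sqrt n * (2 * γ - (d : ℝ) * μ))) := by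
    rw [integral_const_mul]
    exact mul_le_mul_of_nonneg_left hl2bound hsd
  have hkey : Real.sqrt d * (2 * Real.sqrt d / (Real.sqrt n * (2 * γ - (d : ℝ) * μ)))
      = 2 * (d : ℝ) / (Real.sqrt n * (2 * γ - (d : ℝ) * μ)) := by
    have : Real.sqrt d * Real.sqrt d = (d : ℝ) :=
      Real.mul_self_sqrt (Nat.cast_nonneg d)
    rw [mul_div_assoc']
    congr 1
    linear_combination 2 * this
  linarith [hmono, h2, hkey.le]
end
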